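/- Let A be symmetric positive definite with diagonal D = diag(A), and suppose α D ⪯ A ⪯ β D for constants 0 < α ≤ β (in the Loewner order). Then for S = B A⁻¹ Bᵀ and Ŝ = B D⁻¹ Bᵀ, every generalized eigenvalue λ with S p = λ Ŝ p and Ŝ p ≠ 0 satisfies 1/β ≤ λ ≤ 1/α. -/

import Mathlib

open Matrix

/-- Inverse anti-monotonicity of quadratic forms for positive definite real matrices. -/
lemma inv_quad_le_aux {n : ℕ} {A M : Matrix (Fin n) (Fin n) ℝ}
    (hA : A.PosDef) (hM : M.PosDef)
    (h : ∀ x : Fin n → ℝ, x ⬝ᵥ A.mulVec x ≤ x ⬝ᵥ M.mulVec x) :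
    ∀ x : Fin n → ℝ, x ⬝ᵥ M⁻¹.mulVec x ≤ x ⬝ᵥ A⁻¹.mulVec x := by
  intro x
  have hAdet : IsUnit A.det := isUnit_iff_ne_zero.mpr hA.det_pos.ne'
  have hMdet : IsUnit M.det := isUnit_iff_ne_zero.mpr hM.det_pos.ne'
  set y := M⁻¹.mulVec x with hy
  set z := A⁻¹.mulVec x with hz
  have hAz : A.mulVec z = x := by
    rw [hz, Matrix.mulVec_mulVec, Matrix.mul_nonsing_inv A hAdet, Matrix.one_mulVec]
  have hMy : M.mulVec y = x := by
    rw [hy, Matrix.mulVec_mulVec, Matrix.mul_nonsing_inv M hMdet, Matrix.one_mulVec]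
  -- symmetry facts
  have hAsymm : Aᵀ = A := hA.1
  have hw : (0:ℝ) ≤ (y - z) ⬝ᵥ A.mulVec (y - z) := by
    have := hA.posSemidef.dotProduct_mulVec_nonneg (y - z)
    simpa using this
  have hexp : (y - z) ⬝ᵥ A.mulVec (y - z)
      = y ⬝ᵥ A.mulVec y - y ⬝ᵥ x - x ⬝ᵥ y + x ⬝ᵥ z := by
    have hzy : z ⬝ᵥ A.mulVec y = x ⬝ᵥ y := by
      rw [Matrix.dotProduct_mulVec, ← Matrix.mulVec_transpose, hAsymm, hAz]
    have hyz : y ⬝ᵥ A.mulVec z = y ⬝ᵥ x := by rw [hAz]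
    have hzz : z ⬝ᵥ A.mulVec z = x ⬝ᵥ z := by
      rw [Matrix.dotProduct_mulVec, ← Matrix.mulVec_transpose, hAsymm, hAz]
    simp only [Matrix.mulVec_sub, dotProduct_sub, sub_dotProduct,
      hzy, hyz, hzz]
    ring
  have hyAy : y ⬝ᵥ A.mulVec y ≤ y ⬝ᵥ x := by
    have := h y
    rwa [hMy] at this
  have hxy : x ⬝ᵥ y = y ⬝ᵥ x := dotProduct_comm x y
  have : x ⬝ᵥ y ≤ x ⬝ᵥ z := by
    rw [hexp] at hw; linarith
  simpa [hy, hz] using this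

theorem stmt8 {n m : ℕ} (A : Matrix (Fin n) (Fin n) ℝ) (B : Matrix (Fin m) (Fin n) ℝ)
    (hA : A.PosDef) (α β : ℝ) (hα : 0 < α) (hαβ : α ≤ β)
    (D : Matrix (Fin n) (Fin n) ℝ) (hD : D = Matrix.diagonal fun i => A i i)
    (hlow : (A - α • D).PosSemidef) (hup : (β • D - A).PosSemidef)
    (S Shat : Matrix (Fin m) (Fin m) ℝ)
    (hS : S = B * A⁻¹ * Bᵀ) (hShat : Shat = B * D⁻¹ * Bᵀ) :
    ∀ (lam : ℝ) (p : Fin m → ℝ), S.mulVec p = lam • Shat.mulVec p →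
      Shat.mulVec p ≠ 0 → 1 / β ≤ lam ∧ lam ≤ 1 / α := by
  have hβ : 0 < β := lt_of_lt_of_le hα hαβ
  -- diagonal entries of A are positive
  have hdiag : ∀ i, 0 < A i i := by
    intro i
    have h1 : (Pi.single i 1 : Fin n → ℝ) ≠ 0 := by
      intro h
      have := congrFun h i
      simp at this
    have := hA.dotProduct_mulVec_pos h1
    simpa [dotProduct, Matrix.mulVec, Pi.single_apply, Finset.mul_sum] using this
  have hDpos : D.PosDef := by
    rw [hD]; exact Matrix.PosDef.diagonal hdiag
  have hαD : (α • D).PosDef := by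
    rw [Matrix.posDef_iff_dotProduct_mulVec]
    constructor
    · show (α • D)ᴴ = α • D
      have := hDpos.1
      simp only [conjTranspose_smul]
      rw [this]
      simp
    · intro x hx
      have := hDpos.dotProduct_mulVec_pos hx
      simp only [Matrix.smul_mulVec, dotProduct_smul, smul_eq_mul]
      positivity
  have hβD : (β • D).PosDef := by
    rw [Matrix.posDef_iff_dotProduct_mulVec]
    constructor
    · show (β • D)ᴴ = β • D
      simp only [conjTranspose_smul]
      rw [hDpos.1]
      simp
    · intro x hx
      have := hDpos.dotProduct_mulVec_pos hx
      simp only [Matrix.smul_mulVec, dotProduct_smul, smul_eq_mul]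
      positivity
  have hDdet : IsUnit D.det := isUnit_iff_ne_zero.mpr hDpos.det_pos.ne'
  -- quadratic form inequalities
  have hql : ∀ x : Fin n → ℝ, x ⬝ᵥ (α • D).mulVec x ≤ x ⬝ᵥ A.mulVec x := by
    intro x
    have := hlow.dotProduct_mulVec_nonneg x
    simp only [Matrix.sub_mulVec, dotProduct_sub, star_trivial] at this
    linarith
  have hqu : ∀ x : Fin n → ℝ, x ⬝ᵥ A.mulVec x ≤ x ⬝ᵥ (β • D).mulVec x := by
    intro x
    have := hup.dotProduct_mulVec_nonneg x
    simp only [Matrix.sub_mulVec, dotProduct_sub, star_trivial] at this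
    linarith
  have hinvl := inv_quad_le_aux hαD hA hql
  have hinvu := inv_quad_le_aux hA hβD hqu
  -- rewrite (c • D)⁻¹ = c⁻¹ • D⁻¹
  have hsmul_inv : ∀ c : ℝ, 0 < c → (c • D)⁻¹ = c⁻¹ • D⁻¹ := by
    intro c hc
    letI : Invertible c := invertibleOfNonzero hc.ne'
    rw [Matrix.inv_smul (A := D) c hDdet, invOf_eq_inv]
  rw [hsmul_inv α hα] at hinvl
  rw [hsmul_inv β hβ] at hinvu
  intro lam p heig hne
  set q : Fin n → ℝ := Bᵀ.mulVec p with hq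
  have hShatq : Shat.mulVec p = B.mulVec (D⁻¹.mulVec q) := by
    rw [hShat, hq, Matrix.mulVec_mulVec, Matrix.mulVec_mulVec]
  have hqne : q ≠ 0 := by
    intro h
    apply hne
    rw [hShatq, h]
    simp
  have hDinv : D⁻¹.PosDef := hDpos.inv
  have hpos : 0 < q ⬝ᵥ D⁻¹.mulVec q := by
    have := hDinv.dotProduct_mulVec_pos hqne
    simpa using this
  -- p ⬝ S p = q ⬝ A⁻¹ q and p ⬝ Shat p = q ⬝ D⁻¹ q
  have hpS : p ⬝ᵥ S.mulVec p = q ⬝ᵥ A⁻¹.mulVec q := by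
    rw [hS]
    rw [show (B * A⁻¹ * Bᵀ).mulVec p = B.mulVec (A⁻¹.mulVec q) by
      rw [hq, Matrix.mulVec_mulVec, Matrix.mulVec_mulVec]]
    rw [Matrix.dotProduct_mulVec, ← Matrix.mulVec_transpose, ← hq]
  have hpShat : p ⬝ᵥ Shat.mulVec p = q ⬝ᵥ D⁻¹.mulVec q := by
    rw [hShatq, Matrix.dotProduct_mulVec, ← Matrix.mulVec_transpose, ← hq]
  have heq : q ⬝ᵥ A⁻¹.mulVec q = lam * (q ⬝ᵥ D⁻¹.mulVec q) := by
    have := congrArg (fun v => p ⬝ᵥ v) heig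
    simp only [dotProduct_smul, smul_eq_mul] at this
    rw [hpS, hpShat] at this
    exact this
  have hl : β⁻¹ * (q ⬝ᵥ D⁻¹.mulVec q) ≤ lam * (q ⬝ᵥ D⁻¹.mulVec q) := by
    have := hinvu q
    simp only [Matrix.smul_mulVec, dotProduct_smul, smul_eq_mul] at this
    linarith [heq ▸ this]
  have hu : lam * (q ⬝ᵥ D⁻¹.mulVec q) ≤ α⁻¹ * (q ⬝ᵥ D⁻¹.mulVec q) := by
    have := hinvl q
    simp only [Matrix.smul_mulVec, dotProduct_smul, smul_eq_mul] at this
    linarith [heq ▸ this]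
  constructor
  · rw [one_div]
    exact le_of_mul_le_mul_right hl hpos
  · rw [one_div]
    exact le_of_mul_le_mul_right hu hpos
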